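/- arXiv:2503.00911 — 2 statements merged into one kernel-verified Lean document; each statement's English description precedes it below -/
import Mathlib

section
/- Let K be a nonarchimedean local field, D₁ and D₂ maximal orders in M₂(K) with d(D₁, D₂) = n, E = D₁ ∩ D₂ the corresponding Eichler order, and r ≥ 0 an integer. Then O_K·1 + π_K^r·E equals the intersection of all maximal orders D' for which there exists a maximal order D with d(D₁,D) + d(D,D₂) = n and d(D, D') ≤ r (i.e. the intersection of all maximal orders at distance at most r from the geodesic segment between D₁ and D₂). -/
noncomputable section

/-- The algebra of 2×2 matrices over `K`. -/
abbrev M2 (K : Type) : Type := Matrix (Fin 2) (Fin 2) K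

section BasicDefs

variable (O : Type) [CommRing O] (K : Type) [Field K] [Algebra O K]

/-- An `O`-order in `M₂(K)`: a subring containing `O·1` (equivalently, an
`O`-subalgebra) which is finitely generated as an `O`-module. -/
def IsOrder (R : Subalgebra O (M2 K)) : Prop :=
  (Subalgebra.toSubmodule R).FG

/-- A full `O`-order in `M₂(K)`: an order which moreover spans `M₂(K)` over `K`. -/
def IsFullOrder (R : Subalgebra O (M2 K)) : Prop :=
  (Subalgebra.toSubmodule R).FG ∧ Submodule.span K (R : Set (M2 K)) = ⊤

/-- A maximal order: a full order which is maximal under inclusion. -/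
def IsMaximalOrder (D : Subalgebra O (M2 K)) : Prop :=
  IsFullOrder O K D ∧
    ∀ D' : Subalgebra O (M2 K), IsFullOrder O K D' → D ≤ D' → D' = D

/-- The standard maximal order `M₂(O_K)`, consisting of all matrices with
integral entries. -/
def stdOrder : Subalgebra O (M2 K) where
  carrier := {x : M2 K | ∀ i j, x i j ∈ (algebraMap O K).range}
  mul_mem' := by
    intro a b ha hb i j
    rw [Matrix.mul_apply]
    exact sum_mem fun k _ => mul_mem (ha i k) (hb k j)
  one_mem' := by
    intro i j
    rw [Matrix.one_apply]
    split_ifs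
    · exact one_mem _
    · exact zero_mem _
  add_mem' := by
    intro a b ha hb i j
    rw [Matrix.add_apply]
    exact add_mem (ha i j) (hb i j)
  zero_mem' := by
    intro i j
    rw [Matrix.zero_apply]
    exact zero_mem _
  algebraMap_mem' := by
    intro r i j
    rw [Matrix.algebraMap_matrix_apply]
    split_ifs
    · exact ⟨r, rfl⟩
    · exact zero_mem _

/-- Conjugate `g·D·g⁻¹` of an order `D` by a unit `g` of `M₂(K)`
(equivalently, by an element of `GL₂(K)`). -/
def conjOrder (g : (M2 K)ˣ) (D : Subalgebra O (M2 K)) : Subalgebra O (M2 K) where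
  carrier := {x : M2 K | (↑g⁻¹ : M2 K) * x * (↑g : M2 K) ∈ D}
  mul_mem' := by
    intro a b ha hb
    have h : (↑g⁻¹ : M2 K) * (a * b) * (↑g : M2 K)
        = ((↑g⁻¹ : M2 K) * a * (↑g : M2 K)) * ((↑g⁻¹ : M2 K) * b * (↑g : M2 K)) := by
      simp only [mul_assoc, Units.mul_inv_cancel_left]
    show (↑g⁻¹ : M2 K) * (a * b) * (↑g : M2 K) ∈ D
    rw [h]
    exact mul_mem ha hb
  one_mem' := by
    show (↑g⁻¹ : M2 K) * 1 * (↑g : M2 K) ∈ D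
    rw [mul_one, Units.inv_mul]
    exact one_mem D
  add_mem' := by
    intro a b ha hb
    show (↑g⁻¹ : M2 K) * (a + b) * (↑g : M2 K) ∈ D
    rw [mul_add, add_mul]
    exact add_mem ha hb
  zero_mem' := by
    show (↑g⁻¹ : M2 K) * 0 * (↑g : M2 K) ∈ D
    rw [mul_zero, zero_mul]
    exact zero_mem D
  algebraMap_mem' := by
    intro r
    show (↑g⁻¹ : M2 K) * algebraMap O (M2 K) r * (↑g : M2 K) ∈ D
    have h : (↑g⁻¹ : M2 K) * algebraMap O (M2 K) r
        = algebraMap O (M2 K) r * (↑g⁻¹ : M2 K) := (Algebra.commutes r _).symm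
    rw [h, mul_assoc, Units.inv_mul, mul_one]
    exact D.algebraMap_mem r

/-- `BTdist O K ϖ n D D'` says that `D` and `D'` are maximal orders at distance
`n` in the Bruhat–Tits tree: there is `g ∈ GL₂(K)` with `D = g·M₂(O_K)·g⁻¹` and
`D' = g·h·M₂(O_K)·h⁻¹·g⁻¹`, where `h = diag(1, ϖ^n)`. -/
def BTdist (ϖ : O) (n : ℕ) (D D' : Subalgebra O (M2 K)) : Prop :=
  ∃ g h : (M2 K)ˣ, (h : M2 K) = Matrix.diagonal ![1, (algebraMap O K ϖ) ^ n] ∧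
    D = conjOrder O K g (stdOrder O K) ∧ D' = conjOrder O K (g * h) (stdOrder O K)

/-- `d(D, D') ≤ r` in the Bruhat–Tits tree. -/
def BTdistLE (ϖ : O) (r : ℕ) (D D' : Subalgebra O (M2 K)) : Prop :=
  ∃ n, n ≤ r ∧ BTdist O K ϖ n D D'

/-- The Gorenstein condition on a full order `R`: `R` admits no non-trivial
expression `R = O_K·1 + I·R'` with `R'` a full order and `I` a proper nonzero
ideal of `O_K`. -/
def GorensteinCond (R : Subalgebra O (M2 K)) : Prop :=
  ¬ ∃ (R' : Subalgebra O (M2 K)) (I : Ideal O), IsFullOrder O K R' ∧ I ≠ ⊥ ∧ I ≠ ⊤ ∧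
      Subalgebra.toSubmodule R
        = Submodule.span O {(1 : M2 K)} ⊔ I • Subalgebra.toSubmodule R'

/-- A Gorenstein order: a full order satisfying the Gorenstein condition. -/
def IsGorenstein (R : Subalgebra O (M2 K)) : Prop :=
  IsFullOrder O K R ∧ GorensteinCond O K R

/-- A Bass order: a full order all of whose (full-order) over-orders are
Gorenstein. -/
def IsBassOrder (B : Subalgebra O (M2 K)) : Prop :=
  IsFullOrder O K B ∧
    ∀ R : Subalgebra O (M2 K), IsFullOrder O K R → B ≤ R → GorensteinCond O K R

/-- `Rg` is the Gorenstein closure of `R`: `Rg` is a Gorenstein full order and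
`R = O_K·1 + I·Rg` for some (nonzero) ideal `I` of `O_K`. -/
def IsGorensteinClosure (R Rg : Subalgebra O (M2 K)) : Prop :=
  IsGorenstein O K Rg ∧ ∃ I : Ideal O, I ≠ ⊥ ∧
    Subalgebra.toSubmodule R
      = Submodule.span O {(1 : M2 K)} ⊔ I • Subalgebra.toSubmodule Rg

/-- An Eichler order: an intersection of two (possibly equal) maximal orders. -/
def IsEichler (E : Subalgebra O (M2 K)) : Prop :=
  ∃ D₁ D₂ : Subalgebra O (M2 K),
    IsMaximalOrder O K D₁ ∧ IsMaximalOrder O K D₂ ∧ E = D₁ ⊓ D₂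

/-- The `O`-module `O_K·1 + ϖ^r·N`. -/
def shrinkMod (ϖ : O) (r : ℕ) (N : Submodule O (M2 K)) : Submodule O (M2 K) :=
  Submodule.span O {(1 : M2 K)} ⊔ Ideal.span {ϖ ^ r} • N

/-- The ring of integers `O_Λ` of a (commutative) subalgebra `Λ ⊆ M₂(K)`:
the set of elements of `Λ` which are integral over `O`. -/
def integralElems (Λ : Subalgebra K (M2 K)) : Set (M2 K) :=
  {x : M2 K | x ∈ Λ ∧ IsIntegral O x}

/-- `π` is a uniformizer of the ring of integers `O_Λ` of `Λ`: it is a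
non-unit of `O_Λ` dividing every non-unit of `O_Λ`. -/
def IsUniformizerOf (Λ : Subalgebra K (M2 K)) (π : M2 K) : Prop :=
  π ∈ integralElems O K Λ ∧ (¬ ∃ y ∈ integralElems O K Λ, π * y = 1) ∧
    ∀ x ∈ integralElems O K Λ,
      (∃ y ∈ integralElems O K Λ, x * y = 1) ∨ ∃ y ∈ integralElems O K Λ, x = π * y

/-- A ghost intersection of maximal orders: there are a finite extension `L/K`
and finitely many maximal `O_L`-orders `D₁, …, D_n` of `M₂(L)` whose
intersection with `M₂(K)` is `R`.  Here `O_L` is the valuation ring of `L`,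
i.e. the integral closure of `O` in `L`. -/
def IsGhostIntersection (R : Subalgebra O (M2 K)) : Prop :=
  ∃ (L : Type) (_ : Field L) (_ : Algebra O L) (_ : Algebra K L) (_ : IsScalarTower O K L),
    FiniteDimensional K L ∧
    ∃ (n : ℕ) (D : Fin (n + 1) → Subalgebra (↥(integralClosure O L)) (M2 L)),
      (∀ i, IsMaximalOrder (↥(integralClosure O L)) L (D i)) ∧
      ∀ x : M2 K, x ∈ R ↔ ∀ i, (algebraMap K L).mapMatrix x ∈ D i

end BasicDefs

section ExtDefs

variable (O : Type) [CommRing O] (K : Type) [Field K] [Algebra O K]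
variable (L : Type) [Field L] [Algebra O L] [Algebra K L] [IsScalarTower O K L]

/-- The image of ϖ in `O_L` remains a uniformizer; for a quadratic extension
`L/K` of local fields this says exactly that `L/K` is unramified. -/
def UniformizerStays (ϖ : O) : Prop :=
  ∃ w : integralClosure O L, (w : L) = algebraMap O L ϖ ∧ Irreducible w

/-- The extension of scalars `D_L = O_L·D` of an order `D ⊆ M₂(K)`, an
`O_L`-order in `M₂(L)`. -/
def extendOrder (D : Subalgebra O (M2 K)) : Subalgebra (↥(integralClosure O L)) (M2 L) :=
  Algebra.adjoin (↥(integralClosure O L))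
    ((fun x : M2 K => (algebraMap K L).mapMatrix x) '' (D : Set (M2 K)))

/-- The extension of scalars `L·Λ ⊆ M₂(L)` of a subalgebra `Λ ⊆ M₂(K)`. -/
def extendAlg (Λ : Subalgebra K (M2 K)) : Subalgebra L (M2 L) :=
  Algebra.adjoin L ((fun x : M2 K => (algebraMap K L).mapMatrix x) '' (Λ : Set (M2 K)))

/-- The integral closure of `O_L` in `L·Λ`, as a subset of `M₂(L)`. -/
def intElemsExt (Λ : Subalgebra K (M2 K)) : Set (M2 L) :=
  {x : M2 L | x ∈ extendAlg K L Λ ∧ IsIntegral (↥(integralClosure O L)) x}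

/-- The intersection `D ∩ M₂(K)` of an `O_L`-order `D ⊆ M₂(L)` with `M₂(K)`,
as an `O`-order in `M₂(K)`. -/
def restrictOrder (D : Subalgebra (↥(integralClosure O L)) (M2 L)) :
    Subalgebra O (M2 K) where
  carrier := {x : M2 K | (algebraMap K L).mapMatrix x ∈ D}
  mul_mem' := by
    intro a b ha hb
    show (algebraMap K L).mapMatrix (a * b) ∈ D
    rw [map_mul]
    exact mul_mem ha hb
  one_mem' := by
    show (algebraMap K L).mapMatrix 1 ∈ D
    rw [map_one]
    exact one_mem D
  add_mem' := by
    intro a b ha hb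
    show (algebraMap K L).mapMatrix (a + b) ∈ D
    rw [map_add]
    exact add_mem ha hb
  zero_mem' := by
    show (algebraMap K L).mapMatrix 0 ∈ D
    rw [map_zero]
    exact zero_mem D
  algebraMap_mem' := by
    intro r
    show (algebraMap K L).mapMatrix (algebraMap O (M2 K) r) ∈ D
    have h : (algebraMap K L).mapMatrix (algebraMap O (M2 K) r)
        = algebraMap (↥(integralClosure O L)) (M2 L)
            ⟨algebraMap O L r, isIntegral_algebraMap⟩ := by
      ext i j
      rw [RingHom.mapMatrix_apply, Matrix.map_apply, Matrix.algebraMap_matrix_apply,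
        Matrix.algebraMap_matrix_apply]
      split_ifs
      · rw [← IsScalarTower.algebraMap_apply]
        rfl
      · rw [map_zero]
    rw [h]
    exact Subalgebra.algebraMap_mem D _

end ExtDefs


/-!
Conjugating by `g`, we may take `D₁ = M₂(O)` and `D₂ = h_n M₂(O) h_n⁻¹` with `h_k = diag(1, ϖ^k)`,
so that `E` is the set of integral matrices whose lower left entry is divisible by `ϖ^n`.
Since the normaliser of `M₂(O)` in `GL₂(K)` is `K^× GL₂(O)`, a maximal order at distance `a` from
`D₁` and `n - a` from `D₂` is `h_a M₂(O) h_a⁻¹` (geodesics in the Bruhat–Tits tree are unique), so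
it contains `E`; and `ϖ^r` maps a maximal order into every maximal order at distance `≤ r` from
it. This gives `⊆`. Conversely, the tube contains the orders `k M₂(O) k⁻¹` with `k = h_a u h_m`,
`u ∈ GL₂(O)`. For `u = 1`, the swap and a transvection, membership in these forces
`ϖ^(n+r) ∣ x₁₀`, `ϖ^r ∣ x₀₁` and `ϖ^r ∣ x₀₀ - x₁₁`, which says exactly that `x ∈ O + ϖ^r E`.
-/

section MaximalOrders

open Matrix

variable {O : Type} [CommRing O] {K : Type} [Field K] [Algebra O K]

theorem mem_conjOrder {g : (M2 K)ˣ} {D : Subalgebra O (M2 K)} {x : M2 K} :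
    x ∈ conjOrder O K g D ↔ ↑g⁻¹ * x * ↑g ∈ D := Iff.rfl

theorem conjOrder_mul (g₁ g₂ : (M2 K)ˣ) (D : Subalgebra O (M2 K)) :
    conjOrder O K (g₁ * g₂) D = conjOrder O K g₁ (conjOrder O K g₂ D) := by
  ext x
  simp only [mem_conjOrder, _root_.mul_inv_rev, Units.val_mul, mul_assoc]

theorem conjOrder_one (D : Subalgebra O (M2 K)) : conjOrder O K 1 D = D := by
  ext x
  simp [mem_conjOrder]

theorem conjOrder_inv_conjOrder (g : (M2 K)ˣ) (D : Subalgebra O (M2 K)) :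
    conjOrder O K g⁻¹ (conjOrder O K g D) = D := by
  rw [← conjOrder_mul, inv_mul_cancel, conjOrder_one]

theorem conjOrder_injective (g : (M2 K)ˣ) : Function.Injective (conjOrder O K g) :=
  Function.LeftInverse.injective (conjOrder_inv_conjOrder (O := O) g)

theorem conjOrder_mono (g : (M2 K)ˣ) {D D' : Subalgebra O (M2 K)} (h : D ≤ D') :
    conjOrder O K g D ≤ conjOrder O K g D' := fun _ hx => h hx

theorem conjOrder_inf (g : (M2 K)ˣ) (A B : Subalgebra O (M2 K)) :
    conjOrder O K g (A ⊓ B) = conjOrder O K g A ⊓ conjOrder O K g B := rfl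

theorem conjOrder_eq_conjOrder_iff {g g' : (M2 K)ˣ} {D : Subalgebra O (M2 K)} :
    conjOrder O K g D = conjOrder O K g' D ↔ conjOrder O K (g⁻¹ * g') D = D := by
  rw [← (conjOrder_injective g⁻¹).eq_iff, conjOrder_inv_conjOrder, ← conjOrder_mul, eq_comm]

theorem conjOrder_eq_of_val_eq_smul {g g' : (M2 K)ˣ} {c : Kˣ} (h : (g : M2 K) = (c : K) • ↑g')
    (D : Subalgebra O (M2 K)) : conjOrder O K g D = conjOrder O K g' D := by
  have hinv : (↑g⁻¹ : M2 K) = (↑c⁻¹ : K) • ↑g'⁻¹ := Units.inv_eq_of_mul_eq_one_right <| by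
    rw [h, smul_mul_smul_comm, Units.mul_inv, Units.mul_inv, one_smul]
  ext x
  rw [mem_conjOrder, mem_conjOrder, hinv, h, Matrix.smul_mul, Matrix.smul_mul, Matrix.mul_smul,
    smul_smul, Units.inv_mul, one_smul]

theorem coe_conjOrder (g : (M2 K)ˣ) (D : Subalgebra O (M2 K)) :
    (conjOrder O K g D : Set (M2 K)) = (ConjAct.toConjAct g • ·) '' D := by
  ext x
  simp only [ConjAct.units_smul_def]
  constructor
  · intro hx
    exact ⟨_, hx, by simp [mul_assoc]⟩
  · rintro ⟨y, hy, rfl⟩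
    simpa [mem_conjOrder, mul_assoc] using hy

theorem isFullOrder_conjOrder (g : (M2 K)ˣ) {D : Subalgebra O (M2 K)} (hD : IsFullOrder O K D) :
    IsFullOrder O K (conjOrder O K g D) := by
  obtain ⟨hfg, hspan⟩ := hD
  constructor
  · have : Subalgebra.toSubmodule (conjOrder O K g D) = (Subalgebra.toSubmodule D).map
        (MulSemiringAction.toAlgEquiv O (M2 K) (ConjAct.toConjAct g)).toLinearMap :=
      SetLike.coe_injective (by rw [Submodule.map_coe]; exact coe_conjOrder g D)
    rw [this]
    exact hfg.map _
  · let e := (MulSemiringAction.toAlgEquiv K (M2 K) (ConjAct.toConjAct g)).toLinearEquiv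
    rw [coe_conjOrder, show (ConjAct.toConjAct g • · : M2 K → M2 K) = e from rfl,
      ← LinearEquiv.coe_toLinearMap, Submodule.span_image, hspan, Submodule.map_top,
      LinearMap.range_eq_top]
    exact e.surjective

theorem isMaximalOrder_conjOrder (g : (M2 K)ˣ) {D : Subalgebra O (M2 K)}
    (hD : IsMaximalOrder O K D) : IsMaximalOrder O K (conjOrder O K g D) := by
  refine ⟨isFullOrder_conjOrder g hD.1, fun D' hD' hle => ?_⟩
  have h := hD.2 _ (isFullOrder_conjOrder g⁻¹ hD') <| by
    simpa only [conjOrder_inv_conjOrder] using conjOrder_mono g⁻¹ hle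
  rw [← h, ← conjOrder_mul, mul_inv_cancel, conjOrder_one]

theorem mem_stdOrder {x : M2 K} :
    x ∈ stdOrder O K ↔ ∀ i j, x i j ∈ (algebraMap O K).range := Iff.rfl

theorem fin_two_mem_stdOrder_iff {a b c d : K} :
    !![a, b; c, d] ∈ stdOrder O K ↔ a ∈ (algebraMap O K).range ∧ b ∈ (algebraMap O K).range ∧
      c ∈ (algebraMap O K).range ∧ d ∈ (algebraMap O K).range := by
  simp only [mem_stdOrder, Fin.forall_fin_two, of_apply, cons_val_zero, cons_val_one, and_assoc]

theorem single_one_mem_stdOrder (i j : Fin 2) : single i j 1 ∈ stdOrder O K := by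
  intro a b
  rw [single_apply]
  split_ifs
  exacts [one_mem _, zero_mem _]

theorem toSubmodule_stdOrder :
    Subalgebra.toSubmodule (stdOrder O K) = LinearMap.range (Algebra.linearMap O K).mapMatrix := by
  ext x
  simp only [Subalgebra.mem_toSubmodule, mem_stdOrder, LinearMap.mem_range, RingHom.mem_range]
  constructor
  · intro hx
    choose y hy using hx
    exact ⟨y, ext hy⟩
  · rintro ⟨y, rfl⟩ i j
    exact ⟨y i j, rfl⟩

theorem isFullOrder_stdOrder : IsFullOrder O K (stdOrder O K) := by
  refine ⟨?_, eq_top_iff.mpr fun x _ => ?_⟩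
  · rw [toSubmodule_stdOrder, LinearMap.range_eq_map]
    exact Module.Finite.fg_top.map _
  · rw [matrix_eq_sum_single x]
    refine Submodule.sum_mem _ fun i _ => Submodule.sum_mem _ fun j _ => ?_
    rw [← mul_one (x i j), ← smul_eq_mul, ← smul_single]
    exact Submodule.smul_mem _ _ (Submodule.subset_span (single_one_mem_stdOrder i j))

theorem isMaximalOrder_stdOrder [IsIntegrallyClosed O] [IsFractionRing O K] :
    IsMaximalOrder O K (stdOrder O K) := by
  refine ⟨isFullOrder_stdOrder, fun D hD hle => le_antisymm (fun x hx j k => ?_) hle⟩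
  have hscalar : algebraMap K (M2 K) (x j k) =
      single 0 j 1 * x * single k 0 1 + single 1 j 1 * x * single k 1 1 := by
    rw [single_mul_mul_single, single_mul_mul_single]
    ext a b
    fin_cases a <;> fin_cases b <;> simp [algebraMap_matrix_apply]
  have hmem : algebraMap K (M2 K) (x j k) ∈ D := by
    have hE (i j : Fin 2) : single i j 1 ∈ D := hle (single_one_mem_stdOrder i j)
    rw [hscalar]
    exact add_mem (mul_mem (mul_mem (hE 0 j) hx) (hE k 0)) (mul_mem (mul_mem (hE 1 j) hx) (hE k 1))
  exact IsIntegrallyClosed.isIntegral_iff.mp <|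
    (isIntegral_algebraMap_iff (algebraMap K (M2 K)).injective).mp
      (IsIntegral.of_mem_of_fg D hD.1 _ hmem)

theorem det_mem_of_mem_stdOrder {x : M2 K} (hx : x ∈ stdOrder O K) :
    x.det ∈ (algebraMap O K).range := by
  rw [det_fin_two]
  exact sub_mem (mul_mem (hx 0 0) (hx 1 1)) (mul_mem (hx 0 1) (hx 1 0))

theorem inv_mem_stdOrder {x : M2 K} (hx : x ∈ stdOrder O K)
    (hdet : x.det⁻¹ ∈ (algebraMap O K).range) : x⁻¹ ∈ stdOrder O K := by
  rw [inv_def, Ring.inverse_eq_inv', adjugate_fin_two]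
  intro i j
  fin_cases i <;> fin_cases j <;> simp only [Matrix.smul_apply, of_apply, cons_val', cons_val_zero,
    cons_val_one, empty_val', cons_val_fin_one, smul_eq_mul, Fin.zero_eta, Fin.mk_one]
  exacts [mul_mem hdet (hx 1 1), mul_mem hdet (neg_mem (hx 0 1)),
    mul_mem hdet (neg_mem (hx 1 0)), mul_mem hdet (hx 0 0)]

variable (O K) in
abbrev stdUnits : Subgroup (M2 K)ˣ := (stdOrder O K).toSubmonoid.units

theorem mem_stdUnits {u : (M2 K)ˣ} :
    u ∈ stdUnits O K ↔ (u : M2 K) ∈ stdOrder O K ∧ ↑u⁻¹ ∈ stdOrder O K :=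
  Submonoid.mem_units_iff _ _

theorem mem_stdUnits_of_inv_det_mem {u : (M2 K)ˣ} (hu : (u : M2 K) ∈ stdOrder O K)
    (hdet : (u : M2 K).det⁻¹ ∈ (algebraMap O K).range) : u ∈ stdUnits O K :=
  mem_stdUnits.mpr ⟨hu, by rw [coe_units_inv]; exact inv_mem_stdOrder hu hdet⟩

theorem inv_det_mem_of_mem_stdUnits {u : (M2 K)ˣ} (hu : u ∈ stdUnits O K) :
    (u : M2 K).det⁻¹ ∈ (algebraMap O K).range := by
  rw [← Ring.inverse_eq_inv', ← det_nonsing_inv, ← coe_units_inv]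
  exact det_mem_of_mem_stdOrder (mem_stdUnits.mp hu).2

theorem conjOrder_stdOrder_of_mem_stdUnits {u : (M2 K)ˣ} (hu : u ∈ stdUnits O K) :
    conjOrder O K u (stdOrder O K) = stdOrder O K := by
  rw [mem_stdUnits] at hu
  ext x
  rw [mem_conjOrder]
  refine ⟨fun hx => ?_, fun hx => mul_mem (mul_mem hu.2 hx) hu.1⟩
  simpa [mul_assoc] using mul_mem (mul_mem hu.1 hx) hu.2

theorem mul_single_one_mul_apply (A B : M2 K) (i j p q : Fin 2) :
    (A * single i j 1 * B : M2 K) p q = A p i * B j q := by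
  fin_cases i <;> fin_cases j <;> simp [mul_apply, single_apply, Fin.sum_univ_two]

theorem exists_mem_stdUnits_of_conjOrder_eq [IsDomain O] [ValuationRing O] [IsFractionRing O K]
    {k : (M2 K)ˣ} (hk : conjOrder O K k (stdOrder O K) = stdOrder O K) :
    ∃ c : Kˣ, ∃ u ∈ stdUnits O K, (k : M2 K) = (c : K) • ↑u := by
  have hprod (p i j q : Fin 2) :
      (k : M2 K) p i * (↑k⁻¹ : M2 K) j q ∈ (algebraMap O K).range := by
    have h : (k : M2 K) * single i j 1 * (↑k⁻¹ : M2 K) ∈ conjOrder O K k (stdOrder O K) := by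
      rw [mem_conjOrder]
      simpa [mul_assoc] using single_one_mem_stdOrder (O := O) (K := K) i j
    rw [hk] at h
    simpa [mul_single_one_mul_apply] using h p q
  -- `c⁻¹ k` is integral for an entry `c` of `k` of maximal valuation, and `c k⁻¹` by `hprod`
  set v := ValuationRing.valuation O K
  obtain ⟨⟨p₀, i₀⟩, -, hmax⟩ := Finset.univ.exists_max_image
    (fun q : Fin 2 × Fin 2 => v ((k : M2 K) q.1 q.2)) Finset.univ_nonempty
  have hc : (k : M2 K) p₀ i₀ ≠ 0 := by
    intro h0
    refine k.ne_zero (ext fun p i => ?_)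
    simpa [h0] using hmax (p, i) (Finset.mem_univ _)
  set c := Units.mk0 _ hc
  let u : (M2 K)ˣ := ⟨(c⁻¹ : K) • ↑k, (c : K) • ↑k⁻¹,
    by rw [smul_mul_smul_comm, inv_mul_cancel₀ c.ne_zero, k.mul_inv, one_smul],
    by rw [smul_mul_smul_comm, mul_inv_cancel₀ c.ne_zero, k.inv_mul, one_smul]⟩
  refine ⟨c, u, mem_stdUnits.mpr ⟨fun p i => ?_, fun j q => hprod p₀ i₀ j q⟩, ?_⟩
  · refine (ValuationRing.mem_integer_iff O K _).mp ((Valuation.mem_integer_iff _ _).mpr ?_)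
    change v ((c : K)⁻¹ * (k : M2 K) p i) ≤ 1
    rw [map_mul, map_inv₀]
    exact inv_mul_le_one_of_le₀ (hmax (p, i) (Finset.mem_univ _)) zero_le
  · change (k : M2 K) = (c : K) • ((c⁻¹ : K) • ↑k)
    rw [smul_smul, mul_inv_cancel₀ c.ne_zero, one_smul]

def diagUnit : Kˣ →* (M2 K)ˣ := Units.map
  { toFun := fun t => diagonal ![1, t]
    map_one' := by
      rw [← diagonal_one]
      congr 1
      ext i
      fin_cases i <;> rfl
    map_mul' := fun s t => by
      rw [diagonal_mul_diagonal]
      congr 1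
      ext i
      fin_cases i <;> simp }

theorem diagUnit_val (t : Kˣ) : (diagUnit t : M2 K) = diagonal ![1, (t : K)] := rfl

theorem diagUnit_conj (t : Kˣ) (y : M2 K) :
    ↑(diagUnit t)⁻¹ * y * ↑(diagUnit t) = !![y 0 0, y 0 1 * t; (t : K)⁻¹ * y 1 0, y 1 1] := by
  rw [← map_inv, diagUnit_val, diagUnit_val]
  ext i j
  fin_cases i <;> fin_cases j <;> simp [mul_right_comm _ (y 1 1)]

theorem mem_conjOrder_diagUnit {t : Kˣ} {y : M2 K} :
    y ∈ conjOrder O K (diagUnit t) (stdOrder O K) ↔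
      y 0 0 ∈ (algebraMap O K).range ∧ y 0 1 * t ∈ (algebraMap O K).range ∧
        (t : K)⁻¹ * y 1 0 ∈ (algebraMap O K).range ∧ y 1 1 ∈ (algebraMap O K).range := by
  rw [mem_conjOrder, diagUnit_conj, fin_two_mem_stdOrder_iff]

theorem diagUnit_mem_stdOrder {t : Kˣ} (ht : (t : K) ∈ (algebraMap O K).range) :
    (diagUnit t : M2 K) ∈ stdOrder O K := by
  intro i j
  fin_cases i <;> fin_cases j <;> simp [diagUnit_val, ht, one_mem, zero_mem]

theorem inv_pow_mul_mem_of_le {t : Kˣ} (ht : (t : K) ∈ (algebraMap O K).range) {a n : ℕ}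
    (ha : a ≤ n) {y : K} (hy : ((t : K) ^ n)⁻¹ * y ∈ (algebraMap O K).range) :
    ((t : K) ^ a)⁻¹ * y ∈ (algebraMap O K).range := by
  have : ((t : K) ^ a)⁻¹ * y = (t : K) ^ (n - a) * (((t : K) ^ n)⁻¹ * y) := by
    rw [← pow_sub_mul_pow (t : K) ha]
    field_simp [t.ne_zero]
  rw [this]
  exact mul_mem (pow_mem ht _) hy

theorem mem_stdOrder_of_mem_conjOrder_diagUnit {t : Kˣ} (ht : (t : K) ∈ (algebraMap O K).range)
    {P : M2 K} (hP : P ∈ conjOrder O K (diagUnit t) (stdOrder O K))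
    (h01 : P 0 1 ∈ (algebraMap O K).range) : P ∈ stdOrder O K := by
  obtain ⟨h00, -, h10, h11⟩ := mem_conjOrder_diagUnit.mp hP
  rw [eta_fin_two P, fin_two_mem_stdOrder_iff]
  refine ⟨h00, h01, ?_, h11⟩
  simpa [t.ne_zero] using mul_mem ht h10

theorem inf_le_conjOrder_diagUnit {t : Kˣ} (ht : (t : K) ∈ (algebraMap O K).range) {a n : ℕ}
    (ha : a ≤ n) (g : (M2 K)ˣ) :
    conjOrder O K g (stdOrder O K) ⊓ conjOrder O K (g * diagUnit (t ^ n)) (stdOrder O K) ≤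
      conjOrder O K (g * diagUnit (t ^ a)) (stdOrder O K) := by
  rintro x ⟨hx, hxn⟩
  rw [SetLike.mem_coe] at hx hxn
  rw [conjOrder_mul, mem_conjOrder, mem_conjOrder_diagUnit] at hxn ⊢
  refine ⟨hxn.1, mul_mem (hx 0 1) ?_, ?_, hxn.2.2.2⟩
  · simpa using pow_mem ht a
  · simpa using inv_pow_mul_mem_of_le ht ha (by simpa using hxn.2.2.1)

theorem pow_smul_mem_conjOrder_diagUnit {ϖ : O} {t : Kˣ} (ht : (t : K) = algebraMap O K ϖ)
    {m r : ℕ} (hm : m ≤ r) {y : M2 K} (hy : y ∈ stdOrder O K) :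
    ϖ ^ r • y ∈ conjOrder O K (diagUnit (t ^ m)) (stdOrder O K) := by
  rw [← Nat.sub_add_cancel hm, pow_add, mul_smul]
  refine Subalgebra.smul_mem _ ?_ _
  have htm : (t : K) ^ m ∈ (algebraMap O K).range :=
    pow_mem (show (t : K) ∈ (algebraMap O K).range from ⟨ϖ, ht.symm⟩) m
  rw [mem_conjOrder_diagUnit]
  simp only [Matrix.smul_apply, Algebra.smul_def, map_pow, ← ht, Units.val_pow_eq_pow_val]
  refine ⟨mul_mem htm (hy 0 0), mul_mem (mul_mem htm (hy 0 1)) htm, ?_, mul_mem htm (hy 1 1)⟩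
  rw [← mul_assoc, inv_mul_cancel₀ (pow_ne_zero _ t.ne_zero), one_mul]
  exact hy 1 0

theorem BTdist_iff {ϖ : O} {t : Kˣ} (ht : (t : K) = algebraMap O K ϖ) {n : ℕ}
    {D D' : Subalgebra O (M2 K)} :
    BTdist O K ϖ n D D' ↔ ∃ g : (M2 K)ˣ, D = conjOrder O K g (stdOrder O K) ∧
      D' = conjOrder O K (g * diagUnit (t ^ n)) (stdOrder O K) := by
  have hh (h : (M2 K)ˣ) :
      (h : M2 K) = diagonal ![1, algebraMap O K ϖ ^ n] ↔ h = diagUnit (t ^ n) := by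
    rw [Units.ext_iff, diagUnit_val, Units.val_pow_eq_pow_val, ht]
  simp only [BTdist, hh, exists_eq_left]

/-- With `h_k = diag(1, t^k)`: by `h`, the lower row of `u₁ h_a u₂` is divisible by `t^a`, so
`h_a⁻¹ u₁ h_a` is integral, and its determinant is that of `u₁`. -/
theorem conj_diagUnit_mem_stdUnits {t : Kˣ} (ht : (t : K) ∈ (algebraMap O K).range) {a b : ℕ}
    {u₁ u₂ u₃ : (M2 K)ˣ} (hu₁ : u₁ ∈ stdUnits O K) (hu₂ : u₂ ∈ stdUnits O K)
    (hu₃ : u₃ ∈ stdUnits O K) {c : K}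
    (h : (↑(u₁ * diagUnit (t ^ a) * u₂ * diagUnit (t ^ b) * u₃) : M2 K) =
      c • ↑(diagUnit (t ^ (a + b)))) :
    (diagUnit (t ^ a))⁻¹ * u₁ * diagUnit (t ^ a) ∈ stdUnits O K := by
  rw [mem_stdUnits] at hu₁ hu₂ hu₃
  have hd (n : ℕ) : (diagUnit (t ^ n) : M2 K) ∈ stdOrder O K :=
    diagUnit_mem_stdOrder (by simpa using pow_mem ht n)
  set Q := u₁ * diagUnit (t ^ a) * u₂
  have hQ : (Q : M2 K) ∈ stdOrder O K := by
    simp only [Q, Units.val_mul]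
    exact mul_mem (mul_mem hu₁.1 (hd a)) hu₂.1
  have hc : c ∈ (algebraMap O K).range := by
    have hM : (↑(Q * diagUnit (t ^ b) * u₃) : M2 K) ∈ stdOrder O K := by
      rw [Units.val_mul, Units.val_mul]
      exact mul_mem (mul_mem hQ (hd b)) hu₃.1
    rw [h] at hM
    have hc := hM 0 0
    rwa [Matrix.smul_apply, diagUnit_val, diagonal_apply_eq, cons_val_zero, smul_eq_mul,
      mul_one] at hc
  have hP : (↑((diagUnit (t ^ a))⁻¹ * Q) : M2 K) ∈
      conjOrder O K (diagUnit (t ^ b)) (stdOrder O K) := by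
    have e : (diagUnit (t ^ b))⁻¹ * ((diagUnit (t ^ a))⁻¹ * Q) * diagUnit (t ^ b) =
        (diagUnit (t ^ (a + b)))⁻¹ * (Q * diagUnit (t ^ b) * u₃) * u₃⁻¹ := by
      rw [pow_add, map_mul]
      group
    obtain ⟨c₀, rfl⟩ := hc
    rw [mem_conjOrder, ← Units.val_mul, ← Units.val_mul, e, Units.val_mul, Units.val_mul, h,
      Matrix.mul_smul, Units.inv_mul, Matrix.smul_mul, one_mul, algebraMap_smul]
    exact Subalgebra.smul_mem _ hu₃.2 c₀
  have hP' := mem_stdOrder_of_mem_conjOrder_diagUnit (by simpa using pow_mem ht b) hP <| by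
    rw [Units.val_mul, ← map_inv, diagUnit_val, diagonal_mul]
    simpa using hQ 0 1
  refine mem_stdUnits_of_inv_det_mem ?_ ?_
  · have e : (diagUnit (t ^ a))⁻¹ * u₁ * diagUnit (t ^ a) = (diagUnit (t ^ a))⁻¹ * Q * u₂⁻¹ := by
      simp only [Q]
      group
    rw [e, Units.val_mul]
    exact mul_mem hP' hu₂.2
  · rw [Units.val_mul, Units.val_mul, det_units_conj']
    exact inv_det_mem_of_mem_stdUnits (mem_stdUnits.mpr hu₁)

section Normalizer

variable [IsDomain O] [ValuationRing O] [IsFractionRing O K]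

/-- Uniqueness of geodesics in the Bruhat–Tits tree. -/
theorem conjOrder_mul_diagUnit_eq {t : Kˣ} (ht : (t : K) ∈ (algebraMap O K).range) {a b : ℕ}
    {k₁ k₂ k₃ : (M2 K)ˣ} (hk₁ : conjOrder O K k₁ (stdOrder O K) = stdOrder O K)
    (hk₂ : conjOrder O K k₂ (stdOrder O K) = stdOrder O K)
    (hk₃ : conjOrder O K k₃ (stdOrder O K) = stdOrder O K)
    (h : k₁ * diagUnit (t ^ a) * k₂ * diagUnit (t ^ b) * k₃ = diagUnit (t ^ (a + b))) :
    conjOrder O K (k₁ * diagUnit (t ^ a)) (stdOrder O K) =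
      conjOrder O K (diagUnit (t ^ a)) (stdOrder O K) := by
  obtain ⟨c₁, u₁, hu₁, e₁⟩ := exists_mem_stdUnits_of_conjOrder_eq hk₁
  obtain ⟨c₂, u₂, hu₂, e₂⟩ := exists_mem_stdUnits_of_conjOrder_eq hk₂
  obtain ⟨c₃, u₃, hu₃, e₃⟩ := exists_mem_stdUnits_of_conjOrder_eq hk₃
  have hrel : (↑(u₁ * diagUnit (t ^ a) * u₂ * diagUnit (t ^ b) * u₃) : M2 K) =
      ((c₁ * c₂ * c₃ : Kˣ) : K)⁻¹ • ↑(diagUnit (t ^ (a + b))) := by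
    rw [← h]
    simp only [Units.val_mul, e₁, e₂, e₃, Matrix.smul_mul, Matrix.mul_smul, smul_smul]
    field_simp
    rw [one_smul]
  have hV := conj_diagUnit_mem_stdUnits ht hu₁ hu₂ hu₃ hrel
  calc conjOrder O K (k₁ * diagUnit (t ^ a)) (stdOrder O K)
      = conjOrder O K (diagUnit (t ^ a) * ((diagUnit (t ^ a))⁻¹ * u₁ * diagUnit (t ^ a)))
          (stdOrder O K) :=
        conjOrder_eq_of_val_eq_smul (c := c₁) (by simp [e₁, mul_assoc]) _
    _ = conjOrder O K (diagUnit (t ^ a)) (stdOrder O K) := by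
        rw [conjOrder_mul, conjOrder_stdOrder_of_mem_stdUnits hV]

theorem eq_conjOrder_of_BTdist_add {ϖ : O} {t : Kˣ} (ht : (t : K) = algebraMap O K ϖ) {a b : ℕ}
    (g : (M2 K)ˣ) {D : Subalgebra O (M2 K)}
    (hA : BTdist O K ϖ a (conjOrder O K g (stdOrder O K)) D)
    (hB : BTdist O K ϖ b D (conjOrder O K (g * diagUnit (t ^ (a + b))) (stdOrder O K))) :
    D = conjOrder O K (g * diagUnit (t ^ a)) (stdOrder O K) := by
  obtain ⟨g₁, e₁, rfl⟩ := (BTdist_iff ht).mp hA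
  obtain ⟨g₂, e₂, e₃⟩ := (BTdist_iff ht).mp hB
  rw [conjOrder_eq_conjOrder_iff] at e₁ e₂
  rw [eq_comm, conjOrder_eq_conjOrder_iff] at e₃
  have key := conjOrder_mul_diagUnit_eq (a := a) (b := b) ⟨ϖ, ht.symm⟩ e₁ e₂ e₃ <| by
    rw [pow_add, map_mul]
    group
  rw [show g₁ * diagUnit (t ^ a) = g * (g⁻¹ * g₁ * diagUnit (t ^ a)) by group, conjOrder_mul, key,
    ← conjOrder_mul]

theorem inf_le_of_BTdist_add {ϖ : O} {t : Kˣ} (ht : (t : K) = algebraMap O K ϖ) {a b : ℕ}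
    {D₁ D₂ D : Subalgebra O (M2 K)} (hd : BTdist O K ϖ (a + b) D₁ D₂)
    (hA : BTdist O K ϖ a D₁ D) (hB : BTdist O K ϖ b D D₂) : D₁ ⊓ D₂ ≤ D := by
  obtain ⟨g, rfl, rfl⟩ := (BTdist_iff ht).mp hd
  rw [eq_conjOrder_of_BTdist_add ht g hA hB]
  exact inf_le_conjOrder_diagUnit ⟨ϖ, ht.symm⟩ (Nat.le_add_right a b) g

end Normalizer

open Pointwise in
theorem mem_shrinkMod {ϖ : O} {r : ℕ} {N : Submodule O (M2 K)} {x : M2 K} :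
    x ∈ shrinkMod O K ϖ r N ↔ ∃ c : O, ∃ z ∈ N, c • (1 : M2 K) + ϖ ^ r • z = x := by
  simp only [shrinkMod, Submodule.mem_sup, Submodule.mem_span_singleton,
    Submodule.ideal_span_singleton_smul, Submodule.mem_smul_pointwise_iff_exists]
  constructor
  · rintro ⟨_, ⟨c, rfl⟩, _, ⟨z, hz, rfl⟩, rfl⟩
    exact ⟨c, z, hz, rfl⟩
  · rintro ⟨c, z, hz, rfl⟩
    exact ⟨_, ⟨c, rfl⟩, _, ⟨z, hz, rfl⟩, rfl⟩

theorem shrinkMod_mono (ϖ : O) (r : ℕ) {N N' : Submodule O (M2 K)} (h : N ≤ N') :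
    shrinkMod O K ϖ r N ≤ shrinkMod O K ϖ r N' :=
  sup_le_sup_left (Submodule.smul_mono le_rfl h) _

theorem mem_shrinkMod_conjOrder {ϖ : O} {r : ℕ} {g : (M2 K)ˣ} {A : Subalgebra O (M2 K)}
    {x : M2 K} (h : ↑g⁻¹ * x * ↑g ∈ shrinkMod O K ϖ r (Subalgebra.toSubmodule A)) :
    x ∈ shrinkMod O K ϖ r (Subalgebra.toSubmodule (conjOrder O K g A)) := by
  obtain ⟨c, z, hz, hx⟩ := mem_shrinkMod.mp h
  refine mem_shrinkMod.mpr
    ⟨c, (↑g * z * ↑g⁻¹ : M2 K), by simpa [mem_conjOrder, mul_assoc] using hz, ?_⟩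
  calc c • 1 + ϖ ^ r • (↑g * z * ↑g⁻¹) = ↑g * (c • 1 + ϖ ^ r • z) * ↑g⁻¹ := by
        simp [mul_add, add_mul]
    _ = x := by simp [hx, mul_assoc]

theorem shrinkMod_le_of_BTdist {ϖ : O} {t : Kˣ} (ht : (t : K) = algebraMap O K ϖ) {m r : ℕ}
    (hm : m ≤ r) {D D' : Subalgebra O (M2 K)} (h : BTdist O K ϖ m D D') :
    shrinkMod O K ϖ r (Subalgebra.toSubmodule D) ≤ Subalgebra.toSubmodule D' := by
  obtain ⟨g, rfl, rfl⟩ := (BTdist_iff ht).mp h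
  intro x hx
  obtain ⟨c, z, hz, rfl⟩ := mem_shrinkMod.mp hx
  refine add_mem (Subalgebra.smul_mem _ (one_mem _) c) ?_
  rw [Subalgebra.mem_toSubmodule, conjOrder_mul, mem_conjOrder, mul_smul_comm, smul_mul_assoc]
  exact pow_smul_mem_conjOrder_diagUnit ht hm hz

theorem mem_shrinkMod_of_dvd {ϖ : O} {t : Kˣ} (ht : (t : K) = algebraMap O K ϖ) {n r : ℕ}
    {y : M2 K} (hy : y ∈ stdOrder O K)
    (h10 : ((t : K) ^ (n + r))⁻¹ * y 1 0 ∈ (algebraMap O K).range)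
    (h01 : ((t : K) ^ r)⁻¹ * y 0 1 ∈ (algebraMap O K).range)
    (hdiag : ((t : K) ^ r)⁻¹ * (y 0 0 - y 1 1) ∈ (algebraMap O K).range) :
    y ∈ shrinkMod O K ϖ r (Subalgebra.toSubmodule
      (stdOrder O K ⊓ conjOrder O K (diagUnit (t ^ n)) (stdOrder O K))) := by
  have h10' := inv_pow_mul_mem_of_le ⟨ϖ, ht.symm⟩ (Nat.le_add_left r n) h10
  obtain ⟨c, hc⟩ := hy 1 1
  refine mem_shrinkMod.mpr ⟨c, !![((t : K) ^ r)⁻¹ * (y 0 0 - y 1 1), ((t : K) ^ r)⁻¹ * y 0 1;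
    ((t : K) ^ r)⁻¹ * y 1 0, 0], ⟨?_, ?_⟩, ?_⟩
  · exact fin_two_mem_stdOrder_iff.mpr ⟨hdiag, h01, h10', zero_mem _⟩
  · refine mem_conjOrder_diagUnit.mpr ⟨hdiag, ?_, ?_, zero_mem _⟩
    · simpa using mul_mem h01 (pow_mem (⟨ϖ, ht.symm⟩ : (t : K) ∈ (algebraMap O K).range) n)
    · convert h10 using 1
      simp [pow_add, mul_comm, mul_assoc]
  · ext i j
    rw [Matrix.add_apply, Matrix.smul_apply, Matrix.smul_apply, Algebra.smul_def,
      Algebra.smul_def, map_pow, ← ht]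
    fin_cases i <;> fin_cases j <;> simp [one_apply, hc]

theorem mem_shrinkMod_of_forall_mem_conjOrder {ϖ : O} {t : Kˣ} (ht : (t : K) = algebraMap O K ϖ)
    {n r : ℕ} {y : M2 K} (hy : ∀ a ≤ n, ∀ m ≤ r, ∀ u ∈ stdUnits O K,
      y ∈ conjOrder O K (diagUnit (t ^ a) * u * diagUnit (t ^ m)) (stdOrder O K)) :
    y ∈ shrinkMod O K ϖ r (Subalgebra.toSubmodule
      (stdOrder O K ⊓ conjOrder O K (diagUnit (t ^ n)) (stdOrder O K))) := by
  have hlow : ∀ u ∈ stdUnits O K,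
      ((t : K) ^ r)⁻¹ * (↑u⁻¹ * y * ↑u : M2 K) 1 0 ∈ (algebraMap O K).range := by
    intro u hu
    have h := hy 0 (Nat.zero_le _) r le_rfl u hu
    rw [pow_zero, map_one, one_mul, conjOrder_mul, mem_conjOrder, mem_conjOrder_diagUnit] at h
    simpa using h.2.2.1
  let σ : (M2 K)ˣ := ⟨!![0, 1; 1, 0], !![0, 1; 1, 0], by simp [one_fin_two],
    by simp [one_fin_two]⟩
  have hσ : σ ∈ stdUnits O K := mem_stdUnits.mpr
    ⟨fin_two_mem_stdOrder_iff.mpr ⟨zero_mem _, one_mem _, one_mem _, zero_mem _⟩,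
      fin_two_mem_stdOrder_iff.mpr ⟨zero_mem _, one_mem _, one_mem _, zero_mem _⟩⟩
  let τ : (M2 K)ˣ := ⟨!![1, 0; 1, 1], !![1, 0; -1, 1], by simp [one_fin_two],
    by simp [one_fin_two]⟩
  have hτ : τ ∈ stdUnits O K := mem_stdUnits.mpr
    ⟨fin_two_mem_stdOrder_iff.mpr ⟨one_mem _, zero_mem _, one_mem _, one_mem _⟩,
      fin_two_mem_stdOrder_iff.mpr ⟨one_mem _, zero_mem _, neg_mem (one_mem _), one_mem _⟩⟩
  have h10 : ((t : K) ^ (n + r))⁻¹ * y 1 0 ∈ (algebraMap O K).range := by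
    have h := hy n le_rfl r le_rfl 1 (one_mem _)
    rw [mul_one, ← map_mul, ← pow_add, mem_conjOrder_diagUnit] at h
    simpa using h.2.2.1
  have h01 : ((t : K) ^ r)⁻¹ * y 0 1 ∈ (algebraMap O K).range := by
    simpa [σ, mul_apply, Fin.sum_univ_two, vecMul, dotProduct] using hlow σ hσ
  refine mem_shrinkMod_of_dvd ht
    (by simpa [conjOrder_one] using hy 0 (Nat.zero_le _) 0 (Nat.zero_le _) 1 (one_mem _))
    h10 h01 ?_
  convert sub_mem (sub_mem (inv_pow_mul_mem_of_le ⟨ϖ, ht.symm⟩ (Nat.le_add_left r n) h10) h01)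
    (hlow τ hτ) using 1
  simp [τ, mul_apply, Fin.sum_univ_two, vecMul, dotProduct]
  ring

variable (O K) in
def geodesicTube (ϖ : O) (n r : ℕ) (D₁ D₂ : Subalgebra O (M2 K)) : Set (Subalgebra O (M2 K)) :=
  {D' | IsMaximalOrder O K D' ∧ ∃ D : Subalgebra O (M2 K), IsMaximalOrder O K D ∧
    (∃ a b : ℕ, BTdist O K ϖ a D₁ D ∧ BTdist O K ϖ b D D₂ ∧ a + b = n) ∧ BTdistLE O K ϖ r D D'}

theorem conjOrder_mem_geodesicTube [IsIntegrallyClosed O] [IsFractionRing O K] {ϖ : O} {t : Kˣ}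
    (ht : (t : K) = algebraMap O K ϖ) (g : (M2 K)ˣ) {n r a m : ℕ} (ha : a ≤ n) (hm : m ≤ r)
    {u : (M2 K)ˣ} (hu : u ∈ stdUnits O K) :
    conjOrder O K (g * diagUnit (t ^ a) * u * diagUnit (t ^ m)) (stdOrder O K) ∈
      geodesicTube O K ϖ n r (conjOrder O K g (stdOrder O K))
        (conjOrder O K (g * diagUnit (t ^ n)) (stdOrder O K)) := by
  refine ⟨isMaximalOrder_conjOrder _ isMaximalOrder_stdOrder,
    conjOrder O K (g * diagUnit (t ^ a)) (stdOrder O K),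
    isMaximalOrder_conjOrder _ isMaximalOrder_stdOrder,
    ⟨a, n - a, (BTdist_iff ht).mpr ⟨g, rfl, rfl⟩, (BTdist_iff ht).mpr ⟨_, rfl, ?_⟩,
      Nat.add_sub_cancel' ha⟩,
    m, hm, (BTdist_iff ht).mpr ⟨g * diagUnit (t ^ a) * u, ?_, rfl⟩⟩
  · rw [mul_assoc, ← map_mul, ← pow_add, Nat.add_sub_cancel' ha]
  · rw [conjOrder_mul (g * diagUnit (t ^ a)), conjOrder_stdOrder_of_mem_stdUnits hu]

end MaximalOrders

section Statements

variable (O : Type) [CommRing O] [IsDomain O] [IsDiscreteValuationRing O]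
  [IsAdicComplete (IsLocalRing.maximalIdeal O) O]
  [Finite (IsLocalRing.ResidueField O)]
  (K : Type) [Field K] [Algebra O K] [IsFractionRing O K]

theorem shrink_eichler_eq_tubular_intersection (ϖ : O) (hϖ : Irreducible ϖ)
    (n r : ℕ) (D₁ D₂ : Subalgebra O (M2 K))
    (hd : BTdist O K ϖ n D₁ D₂) :
    (shrinkMod O K ϖ r (Subalgebra.toSubmodule (D₁ ⊓ D₂)) : Set (M2 K)) =
      ⋂ D' ∈ {D' : Subalgebra O (M2 K) | IsMaximalOrder O K D' ∧
          ∃ D : Subalgebra O (M2 K), IsMaximalOrder O K D ∧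
            (∃ a b : ℕ, BTdist O K ϖ a D₁ D ∧ BTdist O K ϖ b D D₂ ∧ a + b = n) ∧
            BTdistLE O K ϖ r D D'},
        (D' : Set (M2 K)) := by
  obtain ⟨t, ht⟩ : ∃ t : Kˣ, (t : K) = algebraMap O K ϖ :=
    ⟨Units.mk0 _ ((map_ne_zero_iff _ (IsFractionRing.injective O K)).mpr hϖ.ne_zero), rfl⟩
  obtain ⟨g, rfl, rfl⟩ := (BTdist_iff ht).mp hd
  ext x
  simp only [SetLike.mem_coe, Set.mem_iInter₂]
  constructor
  · rintro hx D' ⟨-, D, -, ⟨a, b, hA, hB, rfl⟩, m, hm, hD'⟩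
    exact shrinkMod_le_of_BTdist ht hm hD'
      (shrinkMod_mono ϖ r (Subalgebra.toSubmodule.monotone (inf_le_of_BTdist_add ht hd hA hB)) hx)
  · intro hx
    rw [conjOrder_mul, ← conjOrder_inf]
    refine mem_shrinkMod_conjOrder <|
      mem_shrinkMod_of_forall_mem_conjOrder ht fun a ha m hm u hu => ?_
    rw [← mem_conjOrder, ← conjOrder_mul, ← mul_assoc, ← mul_assoc]
    exact hx _ (conjOrder_mem_geodesicTube ht g ha hm hu)

end Statements

end
end

section
/- Let K be a nonarchimedean local field, L/K a quadratic field extension, and Λ ⊆ M₂(K) a K-subalgebra isomorphic as K-algebra to L, with ring of integers O_Λ (a discrete valuation ring) and uniformizer π_Λ. Let B be a full order in M₂(K) with O_Λ ⊆ B. Then every full order B' with O_Λ ⊆ B' ⊆ B has the form B' = O_Λ + π_Λ^r·B for some integer r ≥ 0. -/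
noncomputable section

/-!
Pick `x₀ ∉ Λ`. Since `dim_K M₂(K) = 2 · dim_K Λ`, every `m ∈ M₂(K)` is uniquely `a + b x₀`
with `a, b ∈ Λ ≅ L`, and the second coordinate `φ(m) = b` is left `Λ`-linear with kernel `Λ`.
As `B ∩ Λ = O_Λ`, an order `B ⊇ O_Λ` is determined modulo `O_Λ` by `φ(B)`, a finitely generated
nonzero `O_L`-submodule of `L`. The uniformizer, together with the noetherianity inherited from
`B`, makes `O_L` a discrete valuation ring, so `φ(B)` and `φ(B') ⊆ φ(B)` are principal fractional
ideals and `φ(B') = π^r φ(B)`; pulling back along `φ` gives `B' = O_Λ + π^r B`.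
-/

open scoped Pointwise

theorem Submodule.eq_inf_ker_sup_of_map_eq {R M N : Type*} [Ring R] [AddCommGroup M]
    [Module R M] [AddCommGroup N] [Module R N] (f : M →ₗ[R] N) {P P' Q : Submodule R M}
    (hP' : P' ≤ P) (hQ : Q ≤ P) (hker : P ⊓ LinearMap.ker f ≤ P') (hf : P'.map f = Q.map f) :
    P' = P ⊓ LinearMap.ker f ⊔ Q := by
  have hP'Q : P' ≤ Q ⊔ LinearMap.ker f := (LinearMap.map_le_map_iff f).mp hf.le
  have hQP' : Q ≤ P' ⊔ LinearMap.ker f := (LinearMap.map_le_map_iff f).mp hf.ge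
  refine le_antisymm ?_ (sup_le hker ?_)
  · calc P' ≤ (Q ⊔ LinearMap.ker f) ⊓ P := le_inf hP'Q hP'
      _ = Q ⊔ LinearMap.ker f ⊓ P := sup_inf_assoc_of_le _ hQ
      _ = P ⊓ LinearMap.ker f ⊔ Q := by rw [inf_comm, sup_comm]
  · calc Q ≤ (P' ⊔ LinearMap.ker f) ⊓ P := le_inf hQP' hQ
      _ = P' ⊔ LinearMap.ker f ⊓ P := sup_inf_assoc_of_le _ hP'
      _ ≤ P' := sup_le le_rfl (by rw [inf_comm]; exact hker)

theorem IsDiscreteValuationRing.of_forall_isUnit_or_dvd {A : Type*} [CommRing A] [IsDomain A]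
    [IsNoetherianRing A] (hA : ¬IsField A) {ϖ : A} (hϖ : ¬IsUnit ϖ)
    (h : ∀ x, IsUnit x ∨ ϖ ∣ x) : IsDiscreteValuationRing A ∧ Irreducible ϖ := by
  have hnonunits : ∀ x : A, x ∈ nonunits A ↔ ϖ ∣ x := fun x =>
    ⟨(h x).resolve_left, fun hx hu => hϖ (isUnit_of_dvd_unit hx hu)⟩
  have : IsLocalRing A := IsLocalRing.of_nonunits_add fun a b ha hb => by
    rw [hnonunits] at ha hb ⊢
    exact dvd_add ha hb
  have hmax : IsLocalRing.maximalIdeal A = Ideal.span {ϖ} := by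
    ext x
    rw [IsLocalRing.mem_maximalIdeal, hnonunits, Ideal.mem_span_singleton]
  have : IsDiscreteValuationRing A := ((IsDiscreteValuationRing.TFAE A hA).out 0 4).mpr
    (⟨ϖ, hmax⟩ : (IsLocalRing.maximalIdeal A).IsPrincipal)
  exact ⟨this, (IsDiscreteValuationRing.irreducible_iff_uniformizer ϖ).mpr hmax⟩

theorem Submodule.exists_eq_pow_smul_of_le {A F : Type*} [CommRing A] [IsDomain A]
    [IsDiscreteValuationRing A] [Field F] [Algebra A F] [IsFractionRing A F] {ϖ : A}
    (hϖ : Irreducible ϖ) {N N' : Submodule A F} (hN : N.FG) (hN' : N' ≠ ⊥) (hle : N' ≤ N) :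
    ∃ r : ℕ, N' = ϖ ^ r • N := by
  have hfrac : IsFractional (nonZeroDivisors A) N := FractionalIdeal.isFractional_of_fg hN
  obtain ⟨γ, rfl⟩ := (FractionalIdeal.isPrincipal ⟨N, hfrac⟩).principal
  obtain ⟨γ', rfl⟩ := (FractionalIdeal.isPrincipal
    ⟨N', FractionalIdeal.isFractional_of_le (J := ⟨_, hfrac⟩) hle⟩).principal
  obtain ⟨c, rfl⟩ := Submodule.mem_span_singleton.mp (hle (Submodule.mem_span_singleton_self γ'))
  have hc : c ≠ 0 := by
    rintro rfl
    simp at hN'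
  obtain ⟨r, u, rfl⟩ := IsDiscreteValuationRing.eq_unit_mul_pow_irreducible hc hϖ
  refine ⟨r, ?_⟩
  rw [Submodule.smul_span, Set.smul_set_singleton, mul_smul,
    Submodule.span_singleton_smul_eq u.isUnit]

theorem integralClosure.not_isField {O L : Type*} [CommRing O] [CommRing L] [Algebra O L]
    (hO : ¬IsField O) (hinj : Function.Injective (algebraMap O L)) :
    ¬IsField (integralClosure O L) := by
  have : Function.Injective (algebraMap O (integralClosure O L)) :=
    fun a b h => hinj (congrArg Subtype.val h)
  exact fun h => hO (isField_of_isIntegral_of_isField this h)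

theorem Submodule.exists_restrictScalars_eq_map {O R L : Type*} [CommRing O] [Ring R]
    [Algebra O R] [CommRing L] [Algebra O L] (φ : R →ₗ[O] L) (S : Subalgebra O L)
    (C : Subalgebra O R) (hC : ∀ s ∈ S, ∃ c ∈ C, ∀ m, φ (c * m) = s * φ m) :
    ∃ N : Submodule S L, N.restrictScalars O = (Subalgebra.toSubmodule C).map φ := by
  refine ⟨{ (Subalgebra.toSubmodule C).map φ with smul_mem' := ?_ }, rfl⟩
  rintro ⟨s, hs⟩ _ ⟨m, hm, rfl⟩
  obtain ⟨c, hc, hcm⟩ := hC s hs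
  exact ⟨c * m, C.mul_mem hc hm, hcm m⟩

theorem Submodule.restrictScalars_smul_eq_map {O R L : Type*} [CommRing O] [Ring R]
    [Algebra O R] [CommRing L] [Algebra O L] (φ : R →ₗ[O] L) {S : Subalgebra O L}
    {N : Submodule S L} {C : Submodule O R} (hN : N.restrictScalars O = C.map φ) {s : S} {t : R}
    (hst : ∀ m, φ (t * m) = s * φ m) :
    (s • N).restrictScalars O = (C.map (LinearMap.mulLeft O t)).map φ := by
  ext x
  rw [Submodule.restrictScalars_mem, ← Submodule.map_comp, Submodule.mem_map]
  constructor
  · intro hx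
    obtain ⟨y, hy, rfl⟩ := (Submodule.mem_smul_pointwise_iff_exists _ _ _).mp hx
    obtain ⟨m, hm, rfl⟩ := (hN ▸ hy : y ∈ C.map φ)
    exact ⟨m, hm, hst m⟩
  · rintro ⟨m, hm, rfl⟩
    exact (Submodule.mem_smul_pointwise_iff_exists _ _ _).mpr
      ⟨φ m, (hN ▸ Submodule.mem_map_of_mem hm :), (hst m).symm⟩

section Coordinates

open Module

variable {K R L : Type*} [Field K] [Ring R] [Algebra K R] [Field L] [Algebra K L]
  {Λ : Subalgebra K R}

def AlgEquiv.pairMap (e : Λ ≃ₐ[K] L) (x₀ : R) : L × L →ₗ[K] R :=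
  (Λ.val.toLinearMap ∘ₗ e.symm.toLinearMap).coprod
    (LinearMap.mulRight K x₀ ∘ₗ Λ.val.toLinearMap ∘ₗ e.symm.toLinearMap)

theorem AlgEquiv.pairMap_apply (e : Λ ≃ₐ[K] L) (x₀ : R) (p : L × L) :
    e.pairMap x₀ p = e.symm p.1 + e.symm p.2 * x₀ :=
  rfl

theorem AlgEquiv.pairMap_mul (e : Λ ≃ₐ[K] L) (x₀ : R) (c : Λ) (p : L × L) :
    e.pairMap x₀ (e c * p.1, e c * p.2) = c * e.pairMap x₀ p := by
  simp only [e.pairMap_apply, map_mul, AlgEquiv.symm_apply_apply, Subalgebra.coe_mul]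
  noncomm_ring

theorem AlgEquiv.pairMap_injective (e : Λ ≃ₐ[K] L) {x₀ : R} (hx₀ : x₀ ∉ Λ) :
    Function.Injective (e.pairMap x₀) := by
  rw [← LinearMap.ker_eq_bot, LinearMap.ker_eq_bot']
  rintro ⟨a, b⟩ hab
  rw [e.pairMap_apply] at hab
  obtain rfl : b = 0 := by
    by_contra hb
    have hinv : (e.symm b⁻¹ : R) * e.symm b = 1 := by
      rw [← Subalgebra.coe_mul, ← map_mul, inv_mul_cancel₀ hb, map_one, Subalgebra.coe_one]
    refine hx₀ ?_
    have : x₀ = -(e.symm (b⁻¹ * a) : R) :=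
      calc x₀ = e.symm b⁻¹ * (e.symm b * x₀) := by rw [← mul_assoc, hinv, one_mul]
        _ = -(e.symm (b⁻¹ * a) : R) := by
          rw [eq_neg_of_add_eq_zero_right hab, map_mul, Subalgebra.coe_mul, mul_neg]
    rw [this]
    exact neg_mem (SetLike.coe_mem _)
  simpa using hab

theorem AlgEquiv.exists_linearMap_ker_eq [FiniteDimensional K R] (e : Λ ≃ₐ[K] L)
    (hrank : finrank K R = 2 * finrank K L) :
    ∃ φ : R →ₗ[K] L, Function.Surjective φ ∧ LinearMap.ker φ = Subalgebra.toSubmodule Λ ∧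
      ∀ (c : Λ) (m : R), φ (c * m) = e c * φ m := by
  have : FiniteDimensional K L := e.toLinearEquiv.finiteDimensional
  obtain ⟨x₀, hx₀⟩ : ∃ x₀, x₀ ∉ Λ := by
    by_contra! h
    have htop : Subalgebra.toSubmodule Λ = ⊤ := eq_top_iff.mpr fun x _ => h x
    have : finrank K L = finrank K R := by
      rw [← e.toLinearEquiv.finrank_eq, ← Subalgebra.finrank_toSubmodule, htop, finrank_top]
    have := finrank_pos (R := K) (M := L)
    omega
  have hinj := e.pairMap_injective hx₀
  have hrank' : finrank K (L × L) = finrank K R := by rw [finrank_prod, hrank, two_mul]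
  let ψ := LinearEquiv.ofBijective (e.pairMap x₀)
    ⟨hinj, (LinearMap.injective_iff_surjective_of_finrank_eq_finrank hrank').mp hinj⟩
  have hψ : ∀ p, ψ p = e.pairMap x₀ p := fun _ => rfl
  refine ⟨LinearMap.snd K L L ∘ₗ ψ.symm.toLinearMap, fun b => ⟨ψ (0, b), by simp⟩, ?_, ?_⟩
  · ext m
    simp only [LinearMap.mem_ker, LinearMap.comp_apply, LinearEquiv.coe_coe, LinearMap.snd_apply,
      Subalgebra.mem_toSubmodule]
    constructor
    · intro hm
      rw [← ψ.apply_symm_apply m, hψ, e.pairMap_apply, hm, map_zero, ZeroMemClass.coe_zero,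
        zero_mul, add_zero]
      exact SetLike.coe_mem _
    · intro hm
      rw [show ψ.symm m = (e ⟨m, hm⟩, 0) by rw [ψ.symm_apply_eq, hψ, e.pairMap_apply]; simp]
  · intro c m
    have : ψ.symm (c * m) = (e c * (ψ.symm m).1, e c * (ψ.symm m).2) := by
      rw [ψ.symm_apply_eq, hψ, e.pairMap_mul, ← hψ, ψ.apply_symm_apply]
    simp [this]

end Coordinates

theorem AlgEquiv.isIntegral_coe_iff {O K R L : Type*} [CommRing O] [Field K] [Algebra O K]
    [Ring R] [Algebra K R] [Algebra O R] [IsScalarTower O K R] [Field L] [Algebra K L]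
    [Algebra O L] [IsScalarTower O K L] {Λ : Subalgebra K R} (e : Λ ≃ₐ[K] L) (x : Λ) :
    IsIntegral O (x : R) ↔ IsIntegral O (e x) :=
  (isIntegral_algHom_iff (Λ.val.restrictScalars O) Subtype.val_injective).trans
    (isIntegral_algEquiv (e.restrictScalars O)).symm

section IntegralElems

variable {O K L : Type} [CommRing O] [Field K] [Algebra O K] [Field L] [Algebra O L]
  [Algebra K L] [IsScalarTower O K L] {Λ : Subalgebra K (M2 K)}

theorem coe_mem_integralElems_iff (e : Λ ≃ₐ[K] L) (x : Λ) :
    (x : M2 K) ∈ integralElems O K Λ ↔ e x ∈ integralClosure O L := by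
  simp [integralElems, mem_integralClosure_iff, e.isIntegral_coe_iff]

theorem inf_restrictScalars_eq_span_integralElems {B : Subalgebra O (M2 K)}
    (hB : (Subalgebra.toSubmodule B).FG) (hΛB : integralElems O K Λ ⊆ B) :
    Subalgebra.toSubmodule B ⊓ (Subalgebra.toSubmodule Λ).restrictScalars O =
      Submodule.span O (integralElems O K Λ) := by
  refine le_antisymm ?_ (Submodule.span_le.mpr fun x hx => ⟨hΛB hx, hx.1⟩)
  rintro x ⟨hxB, hxΛ⟩
  exact Submodule.subset_span ⟨hxΛ, IsIntegral.of_mem_of_fg B hB x hxB⟩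

theorem isNoetherianRing_integralClosure [IsNoetherianRing O] (e : Λ ≃ₐ[K] L)
    {B : Subalgebra O (M2 K)} (hB : (Subalgebra.toSubmodule B).FG)
    (hΛB : integralElems O K Λ ⊆ B) : IsNoetherianRing (integralClosure O L) := by
  have : IsNoetherian O (Subalgebra.toSubmodule B) := isNoetherian_of_fg_of_noetherian _ hB
  let g : integralClosure O L →ₗ[O] M2 K := (Λ.val.restrictScalars O).toLinearMap ∘ₗ
    (e.symm.restrictScalars O).toLinearMap ∘ₗ (integralClosure O L).val.toLinearMap
  have hgB : ∀ x, g x ∈ Subalgebra.toSubmodule B :=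
    fun x => hΛB ((coe_mem_integralElems_iff e _).mpr (by simp))
  have hg : Function.Injective g :=
    Subtype.val_injective.comp (e.symm.injective.comp Subtype.val_injective)
  have : IsNoetherian O (integralClosure O L) :=
    isNoetherian_of_injective (g.codRestrict _ hgB) (by
      rwa [← LinearMap.ker_eq_bot, LinearMap.ker_codRestrict, LinearMap.ker_eq_bot])
  exact isNoetherian_of_tower O this

theorem IsUniformizerOf.exists_isUnit_or_dvd (e : Λ ≃ₐ[K] L) {π : M2 K}
    (hπ : IsUniformizerOf O K Λ π) :
    ∃ ϖ : integralClosure O L, (ϖ : L) = e ⟨π, hπ.1.1⟩ ∧ ¬IsUnit ϖ ∧ ∀ x, IsUnit x ∨ ϖ ∣ x := by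
  obtain ⟨hπint, hπunit, hπdvd⟩ := hπ
  have hmem : ∀ x : integralClosure O L, ((e.symm x : Λ) : M2 K) ∈ integralElems O K Λ :=
    fun x => (coe_mem_integralElems_iff e _).mpr (by simp)
  have hcoe : ∀ y ∈ integralElems O K Λ, ∃ z : integralClosure O L, (e.symm z : M2 K) = y :=
    fun y hy => ⟨⟨e ⟨y, hy.1⟩, (coe_mem_integralElems_iff e ⟨y, hy.1⟩).mp hy⟩, by simp⟩
  have hj : Function.Injective fun z : L => ((e.symm z : Λ) : M2 K) :=
    Subtype.val_injective.comp e.symm.injective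
  refine ⟨⟨e ⟨π, hπint.1⟩, (coe_mem_integralElems_iff e _).mp hπint⟩, rfl, ?_, fun x => ?_⟩
  · intro hunit
    obtain ⟨y, hy⟩ := hunit.exists_right_inv
    refine hπunit ⟨_, hmem y, ?_⟩
    simpa using congrArg (fun z : integralClosure O L => ((e.symm z : Λ) : M2 K)) hy
  · rcases hπdvd _ (hmem x) with ⟨y, hy, hxy⟩ | ⟨y, hy, hxy⟩
    · obtain ⟨z, rfl⟩ := hcoe y hy
      exact .inl (IsUnit.of_mul_eq_one z (Subtype.ext (hj (by simpa using hxy))))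
    · obtain ⟨z, rfl⟩ := hcoe y hy
      exact .inr ⟨z, Subtype.ext (hj (by simpa using hxy))⟩

theorem IsUniformizerOf.exists_irreducible [IsDomain O] [IsDiscreteValuationRing O]
    [IsFractionRing O K] (e : Λ ≃ₐ[K] L) {π : M2 K} (hπ : IsUniformizerOf O K Λ π)
    {B : Subalgebra O (M2 K)} (hB : (Subalgebra.toSubmodule B).FG)
    (hΛB : integralElems O K Λ ⊆ B) :
    ∃ ϖ : integralClosure O L, (ϖ : L) = e ⟨π, hπ.1.1⟩ ∧
      IsDiscreteValuationRing (integralClosure O L) ∧ Irreducible ϖ := by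
  obtain ⟨ϖ, hϖπ, hϖunit, hϖdvd⟩ := hπ.exists_isUnit_or_dvd e
  have := isNoetherianRing_integralClosure e hB hΛB
  have hinj : Function.Injective (algebraMap O L) := by
    rw [IsScalarTower.algebraMap_eq O K L]
    exact (algebraMap K L).injective.comp (IsFractionRing.injective O K)
  exact ⟨ϖ, hϖπ, IsDiscreteValuationRing.of_forall_isUnit_or_dvd
    (integralClosure.not_isField (IsDiscreteValuationRing.not_isField O) hinj) hϖunit hϖdvd⟩

theorem IsFullOrder.exists_restrictScalars_eq_map (e : Λ ≃ₐ[K] L) {φ : M2 K →ₗ[K] L}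
    (hφsurj : Function.Surjective φ) (hφmul : ∀ (c : Λ) (m : M2 K), φ (c * m) = e c * φ m)
    {C : Subalgebra O (M2 K)} (hC : IsFullOrder O K C) (hΛC : integralElems O K Λ ⊆ C) :
    ∃ N : Submodule (integralClosure O L) L,
      N.restrictScalars O = (Subalgebra.toSubmodule C).map (φ.restrictScalars O) ∧
        N.FG ∧ N ≠ ⊥ := by
  obtain ⟨N, hN⟩ := Submodule.exists_restrictScalars_eq_map (φ.restrictScalars O) _ C
    fun s hs => ⟨_, hΛC ((coe_mem_integralElems_iff e (e.symm s)).mpr (by simpa using hs)),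
      fun m => by rw [LinearMap.restrictScalars_apply, hφmul, e.apply_symm_apply]; rfl⟩
  refine ⟨N, hN, Submodule.FG.of_restrictScalars O (by rw [hN]; exact hC.1.map _), fun hbot => ?_⟩
  have hφC : ∀ m ∈ C, φ m = 0 := fun m hm => by
    have := Submodule.mem_map_of_mem (f := φ.restrictScalars O) (p := Subalgebra.toSubmodule C) hm
    rwa [← hN, hbot, Submodule.restrictScalars_bot, Submodule.mem_bot] at this
  obtain ⟨m, hm⟩ := hφsurj 1
  rw [LinearMap.ext_on hC.2 (g := 0) hφC] at hm
  exact zero_ne_one hm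

end IntegralElems

section Statements

variable (O : Type) [CommRing O] [IsDomain O] [IsDiscreteValuationRing O]
  [IsAdicComplete (IsLocalRing.maximalIdeal O) O]
  [Finite (IsLocalRing.ResidueField O)]
  (K : Type) [Field K] [Algebra O K] [IsFractionRing O K]

/-- Every full order `B'` between `O_Λ` and a full order `B`
has the form `B' = O_Λ + π_Λ^r·B`. -/
theorem suborders_containing_quadratic_integers
    (L : Type) [Field L] [Algebra O L] [Algebra K L] [IsScalarTower O K L]
    (hquad : Module.finrank K L = 2)
    (Λ : Subalgebra K (M2 K)) (e : ↥Λ ≃ₐ[K] L)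
    (πΛ : M2 K) (hπΛ : IsUniformizerOf O K Λ πΛ)
    (B : Subalgebra O (M2 K)) (hB : IsFullOrder O K B)
    (hΛB : integralElems O K Λ ⊆ (B : Set (M2 K)))
    (B' : Subalgebra O (M2 K)) (hB' : IsFullOrder O K B')
    (hΛB' : integralElems O K Λ ⊆ (B' : Set (M2 K))) (hBB : B' ≤ B) :
    ∃ r : ℕ, Subalgebra.toSubmodule B'
      = Submodule.span O (integralElems O K Λ) ⊔
          Submodule.map (LinearMap.mulLeft O (πΛ ^ r)) (Subalgebra.toSubmodule B) := by
  have : FiniteDimensional K L := .of_finrank_pos (by omega)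
  have := integralClosure.isFractionRing_of_finite_extension (A := O) K L
  obtain ⟨φ, hφsurj, hφker, hφmul⟩ :=
    e.exists_linearMap_ker_eq (by simp [Module.finrank_matrix, hquad])
  obtain ⟨ϖ, hϖπ, _, hϖ⟩ := hπΛ.exists_irreducible e hB.1 hΛB
  obtain ⟨N, hN, hNfg, -⟩ := hB.exists_restrictScalars_eq_map e hφsurj hφmul hΛB
  obtain ⟨N', hN', -, hN'bot⟩ := hB'.exists_restrictScalars_eq_map e hφsurj hφmul hΛB'
  have hle : N' ≤ N := by
    rw [← Submodule.restrictScalars_le O, hN, hN']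
    exact Submodule.map_mono hBB
  obtain ⟨r, hr⟩ := Submodule.exists_eq_pow_smul_of_le hϖ hNfg hN'bot hle
  have hinf : Subalgebra.toSubmodule B ⊓ LinearMap.ker (φ.restrictScalars O) =
      Submodule.span O (integralElems O K Λ) := by
    rw [LinearMap.ker_restrictScalars, hφker, inf_restrictScalars_eq_span_integralElems hB.1 hΛB]
  refine ⟨r, hinf ▸ Submodule.eq_inf_ker_sup_of_map_eq (φ.restrictScalars O) hBB ?_ ?_ ?_⟩
  · rintro _ ⟨m, hm, rfl⟩
    exact B.mul_mem (B.pow_mem (hΛB hπΛ.1) r) hm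
  · exact hinf ▸ Submodule.span_le.mpr hΛB'
  · rw [← hN', hr]
    refine Submodule.restrictScalars_smul_eq_map _ hN fun m => ?_
    have := hφmul (⟨πΛ, hπΛ.1.1⟩ ^ r) m
    rw [map_pow, ← hϖπ] at this
    simpa using this

end Statements

end
end
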